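/- arXiv:math/0310476 — 5 statements merged into one kernel-verified Lean document; each statement's English description precedes it below -/
import Mathlib

section
/- Let G be a finite abelian group, let Γ be a set of d characters on G and let δ > 0. With B_{Γ,δ} the Bohr neighbourhood {x : |arg γ(x)| ≤ 2πδ for all γ ∈ Γ}, one has |B_{Γ,2δ}| ≤ 5^d · |B_{Γ,δ}|. -/
/-!
Cut the window `[-4πδ, 4πδ]` into five intervals of length `2πδ` and sort the points of
`B_{Γ,2δ}` by which interval each `arg γ(x)`, `γ ∈ Γ`, falls into: this gives `5^d` classes. For
`δ < 1/2` two arguments in the same interval differ by at most `2πδ < π`, so no wrap-around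
occurs and `arg γ(x - y) = arg γ(x) - arg γ(y)`; hence `x - y ∈ B_{Γ,δ}` for `x, y` in one class,
and translation embeds each class into `B_{Γ,δ}`. For `δ ≥ 1/2` the set `B_{Γ,δ}` is all of `G`.
-/

open Real Finset

namespace Complex

theorem arg_div_eq_sub_of_abs_lt {z w : ℂ} (hz : z ≠ 0) (hw : w ≠ 0) (h : |arg z - arg w| < π) :
    arg (z / w) = arg z - arg w := by
  rw [← arg_coe_angle_toReal_eq_arg, arg_div_coe_angle hz hw, ← Real.Angle.coe_sub,
    Real.Angle.toReal_coe_eq_self_iff]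
  exact ⟨(abs_lt.mp h).1, (abs_lt.mp h).2.le⟩

end Complex

theorem abs_sub_le_one_of_min_floor_eq {n : ℕ} {s t : ℝ} (hs : s ∈ Set.Icc 0 (n : ℝ))
    (ht : t ∈ Set.Icc 0 (n : ℝ)) (h : min (n - 1) ⌊s⌋₊ = min (n - 1) ⌊t⌋₊) : |s - t| ≤ 1 := by
  rcases le_or_gt (n - 1) ⌊s⌋₊ with hns | hsn
  · have hnt : n - 1 ≤ ⌊t⌋₊ := by omega
    have hn : (n : ℝ) ≤ ((n - 1 : ℕ) : ℝ) + 1 := by norm_cast; omega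
    have hs_lo := (Nat.le_floor_iff hs.1).mp hns
    have ht_lo := (Nat.le_floor_iff ht.1).mp hnt
    rw [abs_sub_le_iff]; constructor <;> linarith [hs.2, ht.2]
  · have hfloor : ⌊s⌋₊ = ⌊t⌋₊ := by omega
    have hs_lo := Nat.floor_le hs.1
    have hs_hi := Nat.lt_floor_add_one s
    rw [hfloor] at hs_lo hs_hi
    rw [abs_sub_le_iff]; constructor <;> linarith [Nat.floor_le ht.1, Nat.lt_floor_add_one t]

theorem exists_quantizer_Icc (n : ℕ) [NeZero n] {a L : ℝ} (hL : 0 < L) :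
    ∃ q : ℝ → Fin n, ∀ x ∈ Set.Icc a (a + n * L), ∀ y ∈ Set.Icc a (a + n * L),
      q x = q y → |x - y| ≤ L := by
  refine ⟨fun x ↦ ⟨min (n - 1) ⌊(x - a) / L⌋₊, by have := NeZero.pos n; omega⟩, ?_⟩
  intro x hx y hy hxy
  have hmem : ∀ z ∈ Set.Icc a (a + n * L), (z - a) / L ∈ Set.Icc 0 (n : ℝ) := fun z hz ↦
    ⟨div_nonneg (by linarith [hz.1]) hL.le, (div_le_iff₀ hL).2 (by linarith [hz.2])⟩
  have := abs_sub_le_one_of_min_floor_eq (hmem x hx) (hmem y hy) (Fin.val_eq_of_eq hxy)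
  rwa [← sub_div, sub_sub_sub_cancel_right, abs_div, abs_of_pos hL, div_le_one hL] at this

theorem card_le_card_mul_of_sub_mem {G ι : Type*} [AddGroup G] [DecidableEq G] [Fintype ι]
    [DecidableEq ι] {A B : Finset G} (f : G → ι)
    (h : ∀ x ∈ A, ∀ y ∈ A, f x = f y → x - y ∈ B) : #A ≤ Fintype.card ι * #B := by
  calc #A ≤ #B * #(A.image f) := card_le_mul_card_image A _ fun i hi ↦ by
        obtain ⟨x₀, hx₀, rfl⟩ := mem_image.mp hi
        exact card_le_card_of_injOn (· - x₀)
          (fun y hy ↦ h y (mem_filter.mp hy).1 x₀ hx₀ (mem_filter.mp hy).2)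
          (sub_left_injective.injOn)
    _ ≤ #B * Fintype.card ι := Nat.mul_le_mul_left _ (card_le_univ _)
    _ = Fintype.card ι * #B := mul_comm _ _

section Bohr

variable {G : Type*} [AddCommGroup G] [Fintype G]

noncomputable def bohrSet (Γ : Finset (AddChar G ℂ)) (ρ : ℝ) : Finset G :=
  {x | ∀ γ ∈ Γ, |(γ x).arg| ≤ ρ}

theorem natCard_setOf_eq_card_bohrSet (Γ : Finset (AddChar G ℂ)) (ρ : ℝ) :
    Nat.card {x : G | ∀ γ ∈ Γ, |(γ x).arg| ≤ ρ} = #(bohrSet Γ ρ) := by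
  rw [Nat.card_eq_card_toFinset]
  congr 1
  ext x
  simp [bohrSet]

theorem bohrSet_eq_univ (Γ : Finset (AddChar G ℂ)) {ρ : ℝ} (hρ : π ≤ ρ) : bohrSet Γ ρ = univ :=
  eq_univ_of_forall fun x ↦
    mem_filter.mpr ⟨mem_univ x, fun _ _ ↦ (Complex.abs_arg_le_pi _).trans hρ⟩

theorem sub_mem_bohrSet (Γ : Finset (AddChar G ℂ)) {ρ : ℝ} (hρ : ρ < π) {x y : G}
    (h : ∀ γ ∈ Γ, |(γ x).arg - (γ y).arg| ≤ ρ) : x - y ∈ bohrSet Γ ρ := by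
  refine mem_filter.mpr ⟨mem_univ _, fun γ hγ ↦ ?_⟩
  rw [AddChar.map_sub_eq_div, Complex.arg_div_eq_sub_of_abs_lt (γ.val_isUnit x).ne_zero
    (γ.val_isUnit y).ne_zero ((h γ hγ).trans_lt hρ)]
  exact h γ hγ

theorem card_bohrSet_le_pow_mul (Γ : Finset (AddChar G ℂ)) (n : ℕ) [NeZero n] {ρ ρ' : ℝ}
    (hρ' : 0 < ρ') (hρ'π : ρ' < π) (hρ : 2 * ρ ≤ n * ρ') :
    #(bohrSet Γ ρ) ≤ n ^ #Γ * #(bohrSet Γ ρ') := by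
  classical
  obtain ⟨q, hq⟩ := exists_quantizer_Icc n (a := -ρ) hρ'
  have hwindow : ∀ x ∈ bohrSet Γ ρ, ∀ γ ∈ Γ, (γ x).arg ∈ Set.Icc (-ρ) (-ρ + n * ρ') :=
    fun x hx γ hγ ↦ by
      obtain ⟨hlo, hhi⟩ := abs_le.mp ((mem_filter.mp hx).2 γ hγ)
      exact ⟨hlo, by linarith⟩
  have hcard := card_le_card_mul_of_sub_mem (A := bohrSet Γ ρ) (B := bohrSet Γ ρ')
    (fun x (γ : Γ) ↦ q (γ.1 x).arg) fun x hx y hy hxy ↦ sub_mem_bohrSet Γ hρ'π fun γ hγ ↦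
      hq _ (hwindow x hx γ hγ) _ (hwindow y hy γ hγ) (congrFun hxy ⟨γ, hγ⟩)
  simpa using hcard

end Bohr

/-- Lemma 4.1(ii). Let `G` be a finite abelian group, let `Γ` be a
set of `d` characters on `G` and let `δ > 0`. With
`B_{Γ,δ} = {x : |arg γ(x)| ≤ 2πδ for all γ ∈ Γ}`, one has
`|B_{Γ,2δ}| ≤ 5^d · |B_{Γ,δ}|`. -/
theorem bohr_card_doubling {G : Type*} [AddCommGroup G] [Fintype G]
    (Γ : Finset (AddChar G ℂ)) (δ : ℝ) (hδ : 0 < δ) :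
    (Nat.card {x : G | ∀ γ ∈ Γ, |Complex.arg (γ x)| ≤ 2 * π * (2 * δ)} : ℝ) ≤
      5 ^ Γ.card * (Nat.card {x : G | ∀ γ ∈ Γ, |Complex.arg (γ x)| ≤ 2 * π * δ} : ℝ) := by
  rw [natCard_setOf_eq_card_bohrSet, natCard_setOf_eq_card_bohrSet]
  norm_cast
  rcases lt_or_ge δ (1 / 2) with hsmall | hlarge
  · exact card_bohrSet_le_pow_mul Γ 5 (by positivity) (by nlinarith [pi_pos])
      (by push_cast; nlinarith [pi_pos])
  · rw [bohrSet_eq_univ Γ (ρ := 2 * π * δ) (by nlinarith [pi_pos])]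
    exact (card_le_univ _).trans (Nat.le_mul_of_pos_left _ (by positivity))
end

section
/- Let G = (ℤ/2ℤ)^n, let A ⊆ G, let H ≤ G, and let ε ∈ (0, 1/2). Define ind(A;H) = (1/N) Σ_{g∈G} (|A_H^{+g}|/|H|)², where A_H^{+g}(x) = A(x+g) for x ∈ H and N = |G|. If H is not ε-regular for A (i.e. the number of g ∈ G for which sup_{η≠0}|Â_H^{+g}(η)| > ε|H| exceeds εN), then there exists a subgroup H' ≤ H with |G/H'| ≤ 2^{|G/H|} and ind(A;H') ≥ ind(A;H) + ε³. -/
/-- Fourier coefficient on a subgroup `H ≤ (ℤ/2ℤ)ⁿ` of `A_H^{+g}` at `η ∈ H*`. -/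
noncomputable def fcoef {n : ℕ} (A : Set (Fin n → ZMod 2))
    (H : AddSubgroup (Fin n → ZMod 2)) (g : Fin n → ZMod 2) (η : H →+ ZMod 2) : ℝ :=
  ∑ᶠ x : H, Set.indicator A (fun _ => (1 : ℝ)) ((x : Fin n → ZMod 2) + g) *
    (-1 : ℝ) ^ (η x).val

/-- `g` is an `ε`-regular value for `A` with respect to `H`:
`sup_{η ≠ 0} |Â_H^{+g}(η)| ≤ ε|H|`. -/
def IsRegularValue {n : ℕ} (ε : ℝ) (A : Set (Fin n → ZMod 2))
    (H : AddSubgroup (Fin n → ZMod 2)) (g : Fin n → ZMod 2) : Prop :=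
  ∀ η : H →+ ZMod 2, η ≠ 0 → |fcoef A H g η| ≤ ε * Nat.card H

/-- The index `ind(A;H) = (1/N) Σ_{g ∈ G} (|A_H^{+g}|/|H|)²`. -/
noncomputable def ind {n : ℕ} (A : Set (Fin n → ZMod 2))
    (H : AddSubgroup (Fin n → ZMod 2)) : ℝ :=
  (1 / (Fintype.card (Fin n → ZMod 2) : ℝ)) *
    ∑ g : Fin n → ZMod 2,
      ((Nat.card {x : H // (x : Fin n → ZMod 2) + g ∈ A} : ℝ) / Nat.card H) ^ 2

/-!
Write `f = 1_A` and `E_K f (g)` for the mean of `f` over the coset `K + g`, so that `ind(A;K)` is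
the mean of `(E_K f)²`. For `K' ≤ K`, `E_K f` is the `K`-average of `E_{K'} f`, so by
Cauchy–Schwarz the index can only grow when the subgroup shrinks. If `η` is a nonzero character
of `H`, then on each coset of `H` the average over `ker η` equals `E_H f ± f̂(η)/|H|`, each sign
on half of the coset; passing to `ker η` therefore gains exactly `(f̂(η)/|H|)²`, which exceeds `ε²`
on an irregular coset. Irregularity only depends on the coset of `g`, so more than `ε|G/H|` cosets
are irregular. Choosing `⌈ε|G/H|⌉` of them with witnessing characters `η_q` and passing to
`H' = ⋂ ker η_q` gains at least `ε² · ε` on average, while `|G/H'| ≤ 2^⌈ε|G/H|⌉ |G/H| ≤ 2^|G/H|`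
because `|G/H|` is a power of two and `ε ≤ 1/2`.
-/

open Finset
open scoped BigOperators

lemma neg_one_pow_val_add {R : Type*} [Ring R] (a b : ZMod 2) :
    (-1 : R) ^ (a + b).val = (-1) ^ a.val * (-1) ^ b.val := by
  rw [ZMod.val_add, ← neg_one_pow_eq_pow_mod_two (R := R), pow_add]

lemma neg_one_pow_val_mul_self {R : Type*} [Monoid R] [HasDistribNeg R] (a : ZMod 2) :
    (-1 : R) ^ a.val * (-1) ^ a.val = 1 := by
  rw [← pow_add, ← two_mul, pow_mul, neg_one_sq, one_pow]

lemma neg_one_pow_val_of_ne_zero {R : Type*} [Monoid R] [HasDistribNeg R] {a : ZMod 2}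
    (ha : a ≠ 0) : (-1 : R) ^ a.val = -1 := by
  fin_cases a
  · exact absurd rfl ha
  · exact pow_one _

lemma ite_eq_zero_eq_one_add_neg_one_pow_val (a : ZMod 2) :
    (if a = 0 then 1 else 0 : ℝ) = (1 + (-1) ^ a.val) / 2 := by
  by_cases ha : a = 0
  · simp [ha]
  · simp [ha, neg_one_pow_val_of_ne_zero ha]

section CosetAverage

open scoped Classical

variable {G : Type*} [AddCommGroup G] [Fintype G]

noncomputable def cosetAvg (K : AddSubgroup G) (f : G → ℝ) (g : G) : ℝ :=
  𝔼 x : K, f (x + g)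

noncomputable def energy (K : AddSubgroup G) (f : G → ℝ) : ℝ :=
  𝔼 g, cosetAvg K f g ^ 2

variable {K K' K'' : AddSubgroup G} {f F F' : G → ℝ}

lemma cosetAvg_add_of_mem {s : G} (hs : s ∈ K) (g : G) :
    cosetAvg K f (s + g) = cosetAvg K f g :=
  Fintype.expect_equiv (Equiv.addRight ⟨s, hs⟩) _ _ fun x => by
    simp only [Equiv.coe_addRight, AddSubgroup.coe_add, add_assoc]

lemma expect_cosetAvg : 𝔼 g, cosetAvg K F g = 𝔼 g, F g := by
  unfold cosetAvg
  rw [Finset.expect_comm]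
  have hshift (x : K) : 𝔼 g, F (x + g) = 𝔼 g, F g :=
    Fintype.expect_equiv (Equiv.addLeft (x : G)) _ _ fun _ => rfl
  simp only [hshift, Fintype.expect_const]

lemma cosetAvg_comm (g : G) :
    cosetAvg K (cosetAvg K' F) g = cosetAvg K' (cosetAvg K F) g := by
  unfold cosetAvg
  rw [Finset.expect_comm]
  simp only [add_left_comm]

lemma cosetAvg_cosetAvg_of_le (h : K' ≤ K) (g : G) :
    cosetAvg K (cosetAvg K' F) g = cosetAvg K F g := by
  rw [cosetAvg_comm, cosetAvg]
  simp only [cosetAvg_add_of_mem (h (Subtype.prop _)), Fintype.expect_const]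

lemma cosetAvg_mono (h : ∀ x, F x ≤ F' x) (g : G) : cosetAvg K F g ≤ cosetAvg K F' g :=
  expect_le_expect fun _ _ => h _

lemma sq_cosetAvg_le (g : G) : cosetAvg K F g ^ 2 ≤ cosetAvg K (fun x => F x ^ 2) g := by
  simpa [cosetAvg] using expect_mul_sq_le_sq_mul_sq univ (fun x : K => F (x + g)) 1

lemma sq_cosetAvg_le_cosetAvg_sq_cosetAvg (h : K' ≤ K) (g : G) :
    cosetAvg K f g ^ 2 ≤ cosetAvg K (fun x => cosetAvg K' f x ^ 2) g := by
  rw [← cosetAvg_cosetAvg_of_le h]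
  exact sq_cosetAvg_le g

lemma cosetAvg_sq_cosetAvg_mono (h₁ : K'' ≤ K') (h₂ : K' ≤ K) (g : G) :
    cosetAvg K (fun x => cosetAvg K' f x ^ 2) g ≤
      cosetAvg K (fun x => cosetAvg K'' f x ^ 2) g := by
  rw [← cosetAvg_cosetAvg_of_le h₂ (F := fun x => cosetAvg K'' f x ^ 2)]
  exact cosetAvg_mono (fun x => sq_cosetAvg_le_cosetAvg_sq_cosetAvg h₁ x) g

lemma energy_add_le (hle : K' ≤ K) (S : Finset G) {δ : ℝ}
    (hS : ∀ g ∈ S, cosetAvg K f g ^ 2 + δ ≤ cosetAvg K (fun x => cosetAvg K' f x ^ 2) g) :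
    energy K f + δ * #S / Fintype.card G ≤ energy K' f := by
  have hδ : 𝔼 g, (if g ∈ S then δ else 0) = δ * #S / Fintype.card G := by
    rw [Fintype.expect_eq_sum_div_card, sum_ite_mem, univ_inter, sum_const, nsmul_eq_mul,
      mul_comm]
  calc energy K f + δ * #S / Fintype.card G
      = 𝔼 g, (cosetAvg K f g ^ 2 + if g ∈ S then δ else 0) := by
        rw [expect_add_distrib, hδ, energy]
    _ ≤ 𝔼 g, cosetAvg K (fun x => cosetAvg K' f x ^ 2) g := by
        refine expect_le_expect fun g _ => ?_
        split_ifs with hg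
        · exact hS g hg
        · simpa using sq_cosetAvg_le_cosetAvg_sq_cosetAvg hle g
    _ = energy K' f := expect_cosetAvg

noncomputable def cosetFourier (K : AddSubgroup G) (f : G → ℝ) (g : G) (η : K →+ ZMod 2) : ℝ :=
  𝔼 x : K, f (x + g) * (-1) ^ (η x).val

variable {η : K →+ ZMod 2}

lemma sum_neg_one_pow_val_eq_zero (hη : η ≠ 0) : ∑ x : K, (-1 : ℝ) ^ (η x).val = 0 := by
  obtain ⟨t, ht⟩ : ∃ t, η t ≠ 0 := by
    by_contra! h
    exact hη (AddMonoidHom.ext h)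
  have hshift : ∑ x : K, (-1 : ℝ) ^ (η x).val = ∑ x : K, (-1 : ℝ) ^ (η (x + t)).val :=
    (Fintype.sum_equiv (Equiv.addRight t) _ _ fun _ => rfl).symm
  simp only [map_add, neg_one_pow_val_add, neg_one_pow_val_of_ne_zero ht, ← sum_mul] at hshift
  linarith

lemma sum_map_ker (F : G → ℝ) :
    ∑ y : η.ker.map K.subtype, F y = ∑ x : K, F x * (1 + (-1) ^ (η x).val) / 2 := by
  rw [← Fintype.sum_equiv (AddSubgroup.equivMapOfInjective η.ker K.subtype
      K.subtype_injective).toEquiv (fun z => F (z : K)) _ fun _ => rfl,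
    ← Finset.sum_subtype (univ.filter fun x => η x = 0) (by simp) (fun x : K => F x),
    sum_filter]
  refine sum_congr rfl fun x _ => ?_
  rw [mul_div_assoc, ← ite_eq_zero_eq_one_add_neg_one_pow_val, mul_ite, mul_one, mul_zero]

lemma expect_map_ker (hη : η ≠ 0) (F : G → ℝ) :
    𝔼 y : η.ker.map K.subtype, F y = 𝔼 x : K, F x * (1 + (-1) ^ (η x).val) := by
  have hcard : (Fintype.card (η.ker.map K.subtype) : ℝ) = Fintype.card K / 2 := by
    simpa [mul_add, sum_add_distrib, ← sum_div, sum_neg_one_pow_val_eq_zero hη]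
      using sum_map_ker (η := η) (fun _ => 1)
  rw [Fintype.expect_eq_sum_div_card, Fintype.expect_eq_sum_div_card, sum_map_ker, hcard,
    ← sum_div]
  field_simp

lemma cosetAvg_map_ker (hη : η ≠ 0) (g : G) :
    cosetAvg (η.ker.map K.subtype) f g = cosetAvg K f g + cosetFourier K f g η := by
  rw [cosetAvg, expect_map_ker hη (fun y => f (y + g)), cosetAvg, cosetFourier,
    ← expect_add_distrib]
  simp only [mul_add, mul_one]

lemma cosetFourier_add_of_mem {s : G} (hs : s ∈ K) (g : G) :
    cosetFourier K f (s + g) η = (-1) ^ (η ⟨s, hs⟩).val * cosetFourier K f g η := by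
  rw [cosetFourier, cosetFourier, mul_expect]
  refine Fintype.expect_equiv (Equiv.addRight ⟨s, hs⟩) _ _ fun x => ?_
  simp only [Equiv.coe_addRight, map_add, neg_one_pow_val_add, AddSubgroup.coe_add, add_assoc]
  linear_combination
    (-f (x + (s + g)) * (-1) ^ (η x).val) * neg_one_pow_val_mul_self (R := ℝ) (η ⟨s, hs⟩)

lemma abs_cosetFourier_eq_of_mk_eq {g g' : G} (h : (g : G ⧸ K) = g') :
    |cosetFourier K f g η| = |cosetFourier K f g' η| := by
  rw [show g' = (-g + g') + g by abel, cosetFourier_add_of_mem (QuotientAddGroup.eq.mp h),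
    abs_mul, abs_pow, abs_neg, abs_one, one_pow, one_mul]

lemma cosetAvg_sq_cosetAvg_map_ker (hη : η ≠ 0) (g : G) :
    cosetAvg K (fun x => cosetAvg (η.ker.map K.subtype) f x ^ 2) g =
      cosetAvg K f g ^ 2 + cosetFourier K f g η ^ 2 := by
  set α := cosetAvg K f g
  set β := cosetFourier K f g η
  calc cosetAvg K (fun x => cosetAvg (η.ker.map K.subtype) f x ^ 2) g
      = 𝔼 x : K, (α ^ 2 + β ^ 2 + 2 * α * β * (-1) ^ (η x).val) := by
        refine expect_congr rfl fun x _ => ?_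
        dsimp only
        rw [cosetAvg_map_ker hη, cosetAvg_add_of_mem x.2, cosetFourier_add_of_mem x.2]
        linear_combination β ^ 2 * neg_one_pow_val_mul_self (R := ℝ) (η x)
    _ = α ^ 2 + β ^ 2 := by
        have hχ : 𝔼 x : K, (-1 : ℝ) ^ (η x).val = 0 := by
          rw [Fintype.expect_eq_sum_div_card, sum_neg_one_pow_val_eq_zero hη, zero_div]
        rw [expect_add_distrib, ← mul_expect, hχ, Fintype.expect_const]
        ring

lemma sq_cosetAvg_add_sq_cosetFourier_le (hη : η ≠ 0) (hK' : K' ≤ η.ker.map K.subtype)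
    (g : G) :
    cosetAvg K f g ^ 2 + cosetFourier K f g η ^ 2 ≤
      cosetAvg K (fun x => cosetAvg K' f x ^ 2) g := by
  rw [← cosetAvg_sq_cosetAvg_map_ker hη]
  exact cosetAvg_sq_cosetAvg_mono hK' (AddSubgroup.map_subtype_le _) g

lemma card_filter_mk_mem (H : AddSubgroup G) (T : Finset (G ⧸ H)) :
    #(univ.filter fun g : G => (g : G ⧸ H) ∈ T) = Nat.card H * #T := by
  rw [← Fintype.card_subtype, ← Nat.card_eq_fintype_card]
  exact (Nat.card_congr (QuotientAddGroup.preimageMkEquivAddSubgroupProdSet H T)).trans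
    (by rw [Nat.card_prod]; simp)

lemma energy_add_le_of_abs_cosetFourier_ge {H : AddSubgroup G} (T : Finset (G ⧸ H))
    (η : G ⧸ H → H →+ ZMod 2) (hη : ∀ q ∈ T, η q ≠ 0) {ε : ℝ} (hε : 0 ≤ ε)
    (hbig : ∀ q ∈ T, ε ≤ |cosetFourier H f q.out (η q)|) :
    energy H f + ε ^ 2 * #T / H.index ≤ energy ((⨅ q ∈ T, (η q).ker).map H.subtype) f := by
  set S := univ.filter fun g : G => (g : G ⧸ H) ∈ T
  have hG : (Fintype.card G : ℝ) = Nat.card H * H.index := by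
    rw [← Nat.card_eq_fintype_card, ← H.card_mul_index, Nat.cast_mul]
  have hH : (0 : ℝ) < Nat.card H := by exact_mod_cast Nat.card_pos
  calc energy H f + ε ^ 2 * #T / H.index = energy H f + ε ^ 2 * #S / Fintype.card G := by
        rw [card_filter_mk_mem, hG, Nat.cast_mul]
        field_simp
    _ ≤ _ := by
      refine energy_add_le (AddSubgroup.map_subtype_le _) S fun g hg => ?_
      have hq : (g : G ⧸ H) ∈ T := (mem_filter.1 hg).2
      have hle : (⨅ q ∈ T, (η q).ker).map H.subtype ≤ (η g).ker.map H.subtype :=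
        AddSubgroup.map_mono (iInf₂_le _ hq)
      refine le_trans ?_ (sq_cosetAvg_add_sq_cosetFourier_le (hη _ hq) hle g)
      have hbig_g := hbig _ hq
      rw [abs_cosetFourier_eq_of_mk_eq (QuotientAddGroup.out_eq' _)] at hbig_g
      have : ε ^ 2 ≤ cosetFourier H f g (η g) ^ 2 :=
        (pow_le_pow_left₀ hε hbig_g 2).trans (sq_abs _).le
      linarith

end CosetAverage

lemma AddSubgroup.index_map_subtype_biInf_ker_le {G : Type*} [AddGroup G] {H : AddSubgroup G}
    {ι : Type*} (T : Finset ι) (η : ι → H →+ ZMod 2) :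
    ((⨅ i ∈ T, (η i).ker).map H.subtype).index ≤ 2 ^ #T * H.index := by
  rw [AddSubgroup.index_map_subtype]
  gcongr
  calc (⨅ i ∈ T, (η i).ker).index = (⨅ i : T, (η i).ker).index := by rw [iInf_subtype']
    _ ≤ ∏ i : T, (η i).ker.index := AddSubgroup.index_iInf_le _
    _ ≤ ∏ _i : T, 2 := by
        gcongr with i
        rw [AddSubgroup.index_ker]
        exact (Nat.card_le_card_of_injective _ Subtype.val_injective).trans (by simp)
    _ = 2 ^ #T := by simp

lemma two_pow_ceil_mul_le {ε : ℝ} (hε : ε ≤ 1 / 2) (k : ℕ) :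
    2 ^ ⌈ε * 2 ^ k⌉₊ * 2 ^ k ≤ 2 ^ 2 ^ k := by
  rw [← pow_add]
  refine Nat.pow_le_pow_right two_pos ?_
  rcases k with _ | j
  · have : ⌈ε * 2 ^ 0⌉₊ ≤ 1 := Nat.ceil_le.2 (by norm_num; linarith)
    simpa using this
  · have hceil : ⌈ε * 2 ^ (j + 1)⌉₊ ≤ 2 ^ j := Nat.ceil_le.2 <| by
      push_cast
      rw [pow_succ]
      nlinarith [pow_pos (two_pos (α := ℝ)) j]
    have := Nat.lt_two_pow_self (n := j)
    have := pow_succ 2 j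
    omega

section IndexIncrement

open scoped Classical

variable {n : ℕ}

noncomputable def irregularCosets (ε : ℝ) (A : Set (Fin n → ZMod 2))
    (H : AddSubgroup (Fin n → ZMod 2)) : Finset ((Fin n → ZMod 2) ⧸ H) :=
  univ.filter fun q => ¬ IsRegularValue ε A H q.out

lemma ind_eq_energy (A : Set (Fin n → ZMod 2)) (K : AddSubgroup (Fin n → ZMod 2)) :
    ind A K = energy K (A.indicator 1) := by
  rw [ind, energy, Fintype.expect_eq_sum_div_card, one_div, inv_mul_eq_div]
  congr 1
  refine sum_congr rfl fun g _ => ?_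
  rw [cosetAvg, Fintype.expect_eq_sum_div_card, Nat.card_eq_fintype_card, Fintype.card_subtype,
    card_filter, Nat.card_eq_fintype_card]
  push_cast
  simp [Set.indicator_apply]

lemma fcoef_eq_card_mul_cosetFourier (A : Set (Fin n → ZMod 2))
    (H : AddSubgroup (Fin n → ZMod 2)) (g : Fin n → ZMod 2) (η : H →+ ZMod 2) :
    fcoef A H g η = Nat.card H * cosetFourier H (A.indicator 1) g η := by
  rw [fcoef, finsum_eq_sum_of_fintype, cosetFourier, Nat.card_eq_fintype_card,
    Fintype.card_mul_expect]
  rfl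

lemma isRegularValue_iff {ε : ℝ} {A : Set (Fin n → ZMod 2)} {H : AddSubgroup (Fin n → ZMod 2)}
    {g : Fin n → ZMod 2} :
    IsRegularValue ε A H g ↔
      ∀ η : H →+ ZMod 2, η ≠ 0 → |cosetFourier H (A.indicator 1) g η| ≤ ε := by
  have hH : (0 : ℝ) < Nat.card H := by exact_mod_cast Nat.card_pos
  simp only [IsRegularValue, fcoef_eq_card_mul_cosetFourier, abs_mul, Nat.abs_cast, mul_comm ε,
    mul_le_mul_iff_right₀ hH]

lemma mul_index_lt_card_irregular_cosets {ε : ℝ} {A : Set (Fin n → ZMod 2)}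
    {H : AddSubgroup (Fin n → ZMod 2)}
    (hirr : ε * (Fintype.card (Fin n → ZMod 2) : ℝ) <
      (Nat.card {g : Fin n → ZMod 2 // ¬ IsRegularValue ε A H g} : ℝ)) :
    ε * H.index < #(irregularCosets ε A H) := by
  have hcount : Nat.card {g : Fin n → ZMod 2 // ¬ IsRegularValue ε A H g} =
      Nat.card H * #(irregularCosets ε A H) := by
    rw [← card_filter_mk_mem, Nat.card_eq_fintype_card, Fintype.card_subtype]
    congr 1
    ext g
    simp [irregularCosets, isRegularValue_iff,
      abs_cosetFourier_eq_of_mk_eq (QuotientAddGroup.out_eq' (g : _ ⧸ H))]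
  have hG : (Fintype.card (Fin n → ZMod 2) : ℝ) = Nat.card H * H.index := by
    rw [← Nat.card_eq_fintype_card, ← H.card_mul_index, Nat.cast_mul]
  have hH : (0 : ℝ) < Nat.card H := by exact_mod_cast Nat.card_pos
  rw [hcount, hG, Nat.cast_mul, mul_left_comm] at hirr
  exact lt_of_mul_lt_mul_left hirr hH.le

lemma index_eq_two_pow (H : AddSubgroup (Fin n → ZMod 2)) : ∃ k, H.index = 2 ^ k := by
  obtain ⟨k, -, hk⟩ := (Nat.dvd_prime_pow Nat.prime_two).1 (by simpa using H.index_dvd_card)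
  exact ⟨k, hk⟩

end IndexIncrement

/-- Lemma 2.2. Let `G = (ℤ/2ℤ)ⁿ`, `A ⊆ G`, `H ≤ G`,
`ε ∈ (0,1/2)`. If `H` is not `ε`-regular for `A` (more than `εN` values of `g` fail
to be `ε`-regular), then there exists `H' ≤ H` with `|G/H'| ≤ 2^{|G/H|}` and
`ind(A;H') ≥ ind(A;H) + ε³`. -/
theorem index_increment {n : ℕ} (A : Set (Fin n → ZMod 2))
    (H : AddSubgroup (Fin n → ZMod 2)) (ε : ℝ) (hε0 : 0 < ε) (hε : ε < 1 / 2)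
    (hirr : ε * (Fintype.card (Fin n → ZMod 2) : ℝ) <
      (Nat.card {g : Fin n → ZMod 2 // ¬ IsRegularValue ε A H g} : ℝ)) :
    ∃ H' : AddSubgroup (Fin n → ZMod 2), H' ≤ H ∧ H'.index ≤ 2 ^ H.index ∧
      ind A H + ε ^ 3 ≤ ind A H' := by
  classical
  have hbad := mul_index_lt_card_irregular_cosets hirr
  obtain ⟨T, hTbad, hTcard⟩ := exists_subset_card_eq (Nat.ceil_le.2 hbad.le)
  have hchar : ∀ q ∈ T, ∃ η : H →+ ZMod 2, η ≠ 0 ∧ ε < |cosetFourier H (A.indicator 1) q.out η| :=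
    fun q hq => by simpa [irregularCosets, isRegularValue_iff] using hTbad hq
  choose! η hη0 hηbig using hchar
  obtain ⟨k, hk⟩ := index_eq_two_pow H
  refine ⟨_, AddSubgroup.map_subtype_le _,
    (AddSubgroup.index_map_subtype_biInf_ker_le T η).trans ?_, ?_⟩
  · rw [hTcard, hk]
    exact_mod_cast two_pow_ceil_mul_le hε.le k
  · rw [ind_eq_energy, ind_eq_energy]
    refine le_trans ?_ (energy_add_le_of_abs_cosetFourier_ge T η hη0 hε0.le
      fun q hq => (hηbig q hq).le)
    have hT : ε * H.index ≤ #T := hTcard ▸ Nat.le_ceil _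
    have hk0 : (0 : ℝ) < H.index := by
      rw [hk]
      positivity
    rw [pow_succ, mul_div_assoc]
    gcongr
    rwa [le_div_iff₀ hk0]
end

section
/- Let G be a finite abelian group, let ψ : G → ℝ≥0 and let γ be a character of G. Suppose that |ψ̂(γ)| ≥ κ > 0, where ψ̂(γ) = Σ_x ψ(x)γ(x), and suppose that for all x, y ∈ G one has |ψ(x+y) − ψ(x)| ≤ c(y)·ψ(x) for some function c : G → ℝ≥0 with Σ_x ψ(x) = 1. Then for every y ∈ G, κ·|1 − γ(y)| ≤ c(y). -/
/-- from the proof of Lemma 4.5(ix). Let `G` be a finite abelian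
group, `ψ : G → ℝ≥0` with `Σ_x ψ(x) = 1`, and `γ` a character of `G`. Suppose
`|ψ̂(γ)| ≥ κ > 0` where `ψ̂(γ) = Σ_x ψ(x)γ(x)`, and suppose
`|ψ(x+y) − ψ(x)| ≤ c(y)·ψ(x)` for all `x, y` and some `c : G → ℝ≥0`. Then for every
`y ∈ G`, `κ·|1 − γ(y)| ≤ c(y)`. -/
theorem character_continuity_bound {G : Type*} [AddCommGroup G] [Fintype G]
    (ψ : G → ℝ) (hψ0 : ∀ x, 0 ≤ ψ x) (hψ1 : ∑ x : G, ψ x = 1)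
    (γ : AddChar G ℂ) (κ : ℝ) (hκ : 0 < κ)
    (hhat : κ ≤ ‖∑ x : G, (ψ x : ℂ) * γ x‖)
    (c : G → ℝ) (hc : ∀ y, 0 ≤ c y)
    (hcont : ∀ x y : G, |ψ (x + y) - ψ x| ≤ c y * ψ x) :
    ∀ y : G, κ * ‖1 - γ y‖ ≤ c y := by
  intro y
  set S : ℂ := ∑ x : G, (ψ x : ℂ) * γ x with hS
  have key : ∑ x : G, ((ψ (x + y) : ℂ) - ψ x) * γ x = (γ (-y) - 1) * S := by
    rw [sub_mul, one_mul, hS, Finset.mul_sum]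
    rw [show (∑ x : G, ((ψ (x + y) : ℂ) - ψ x) * γ x)
        = (∑ x : G, (ψ (x + y) : ℂ) * γ x) - ∑ x : G, (ψ x : ℂ) * γ x by
      rw [← Finset.sum_sub_distrib]; congr 1; ext x; ring]
    congr 1
    rw [← Equiv.sum_comp (Equiv.subRight y) (fun x => (ψ (x + y) : ℂ) * γ x)]
    apply Finset.sum_congr rfl
    intro x _
    simp only [Equiv.subRight_apply]
    rw [show x - y + y = x by abel, show x - y = x + (-y) by abel,
      AddChar.map_add_eq_mul]
    ring
  have h1 : ‖(γ (-y) - 1) * S‖ ≤ c y := by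
    rw [← key]
    calc ‖∑ x : G, ((ψ (x + y) : ℂ) - ψ x) * γ x‖
        ≤ ∑ x : G, ‖((ψ (x + y) : ℂ) - ψ x) * γ x‖ :=
          norm_sum_le _ _
      _ ≤ ∑ x : G, c y * ψ x := by
          apply Finset.sum_le_sum
          intro x _
          have hg : ‖γ x‖ = 1 := by
            exact γ.norm_apply x
          rw [norm_mul, hg, mul_one, ← Complex.ofReal_sub, Complex.norm_real, Real.norm_eq_abs]
          exact hcont x y
      _ = c y := by rw [← Finset.mul_sum, hψ1, mul_one]
  have hu : ‖γ y‖ = 1 := by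
    exact γ.norm_apply y
  have hmul : γ y * (γ (-y) - 1) = 1 - γ y := by
    rw [mul_sub, ← AddChar.map_add_eq_mul, add_neg_cancel, AddChar.map_zero_eq_one,
      mul_one]
  have hnorm : ‖γ (-y) - 1‖ = ‖1 - γ y‖ := by
    rw [← hmul, norm_mul, hu, one_mul]
  have h2 : κ * ‖1 - γ y‖ ≤ ‖(γ (-y) - 1) * S‖ := by
    rw [norm_mul, hnorm, mul_comm]
    exact mul_le_mul_of_nonneg_left hhat (by positivity)
  linarith
end

section
/- Let M ≥ 20 be an integer and let V = (ℤ/2ℤ)^{⌊M/4⌋}. Then there exist M vectors ξ₁,...,ξ_M ∈ V with the property that for every subset I ⊆ {1,...,M} with |I| ≥ 0.95·M, the vectors {ξᵢ : i ∈ I} span V. -/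
/-!
Count families `ξ : Fin M → V`. A family fails exactly when some nonzero functional `f` on `V`
vanishes on 95% of the `ξᵢ`, i.e. the binary word `f ∘ ξ` has Hamming weight at most `M / 20`.
For a fixed `f ≠ 0` the map `ξ ↦ f ∘ ξ` is a surjective group homomorphism onto `(ℤ/2)^M`, so
only a fraction `|ball| / 2^M` of the families fail for `f`. The union bound over the fewer than
`2^(M/4)` functionals leaves a good family since `2^(M/4) · ∑_{j ≤ M/20} C(M, j) ≤ 2^M`; the
binomial tail is handled by the one-term estimate `(∑_{j ≤ k} C(M, j)) · 8^(M-k) ≤ 9^M`.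
-/

open Finset Fintype

theorem Nat.sum_range_choose_mul_pow_le {M k b : ℕ} (hk : k ≤ M) (hb : 1 ≤ b) :
    (∑ j ∈ range (k + 1), M.choose j) * b ^ (M - k) ≤ (1 + b) ^ M :=
  calc (∑ j ∈ range (k + 1), M.choose j) * b ^ (M - k)
      ≤ ∑ j ∈ range (k + 1), M.choose j * b ^ (M - j) := by
        rw [sum_mul]
        gcongr with j hj
        exact Nat.lt_succ_iff.1 (mem_range.1 hj)
    _ ≤ ∑ j ∈ range (M + 1), M.choose j * b ^ (M - j) :=
        sum_le_sum_of_subset (range_subset_range.2 (by omega))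
    _ = (1 + b) ^ M := by simp [add_pow, mul_comm]

theorem two_pow_mul_sum_range_choose_le (M : ℕ) :
    2 ^ (M / 4) * ∑ j ∈ range (M / 20 + 1), M.choose j ≤ 2 ^ M := by
  set S := ∑ j ∈ range (M / 20 + 1), M.choose j
  have hS : S * 8 ^ (M - M / 20) ≤ 9 ^ M :=
    Nat.sum_range_choose_mul_pow_le (by omega) (by norm_num)
  -- Raising to the 20th power clears the floors; what remains is `2^5 · 9^20 ≤ 2^77`.
  refine (Nat.pow_le_pow_iff_left (by norm_num : 20 ≠ 0)).1 <|
    Nat.le_of_mul_le_mul_right ?_ (by positivity : 0 < 8 ^ (20 * (M - M / 20)))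
  calc (2 ^ (M / 4) * S) ^ 20 * 8 ^ (20 * (M - M / 20))
      = 2 ^ (20 * (M / 4)) * (S * 8 ^ (M - M / 20)) ^ 20 := by ring
    _ ≤ 2 ^ (5 * M) * (9 ^ M) ^ 20 :=
        Nat.mul_le_mul (Nat.pow_le_pow_right (by norm_num) (by omega)) (Nat.pow_le_pow_left hS 20)
    _ = (2 ^ 5 * 9 ^ 20) ^ M := by rw [mul_pow, ← pow_mul, ← pow_mul, ← pow_mul, mul_comm M 20]
    _ ≤ (2 ^ 77) ^ M := by gcongr; norm_num
    _ ≤ 2 ^ (20 * M + 60 * (M - M / 20)) := by rw [← pow_mul]; gcongr <;> omega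
    _ = (2 ^ M) ^ 20 * 8 ^ (20 * (M - M / 20)) := by
        rw [show (8 : ℕ) = 2 ^ 3 by norm_num, ← pow_mul, ← pow_mul, ← pow_add]
        ring_nf

theorem card_hammingNorm_le_le_sum_range_choose (ι : Type*) [Fintype ι] [DecidableEq ι] (k : ℕ) :
    #{w : ι → ZMod 2 | hammingNorm w ≤ k} ≤ ∑ j ∈ range (k + 1), (card ι).choose j := by
  have hsupp_inj : Set.InjOn (fun w : ι → ZMod 2 => ({i | w i ≠ 0} : Finset ι)) Set.univ := by
    intro w _ w' _ h
    funext i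
    have hi : w i ≠ 0 ↔ w' i ≠ 0 := by simpa using congrArg (i ∈ ·) h
    revert hi
    generalize w i = a; generalize w' i = b
    revert a b; decide
  calc #{w : ι → ZMod 2 | hammingNorm w ≤ k}
      ≤ #((range (k + 1)).biUnion fun j => powersetCard j (univ : Finset ι)) := by
        refine card_le_card_of_injOn _ (fun w hw => ?_) (hsupp_inj.mono (Set.subset_univ _))
        have hw : hammingNorm w ≤ k := by simpa using hw
        exact mem_biUnion.2
          ⟨_, mem_range.2 (Nat.lt_succ_of_le hw), mem_powersetCard.2 ⟨subset_univ _, rfl⟩⟩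
    _ ≤ ∑ j ∈ range (k + 1), #(powersetCard j (univ : Finset ι)) := card_biUnion_le
    _ = ∑ j ∈ range (k + 1), (card ι).choose j := by simp [card_powersetCard]

section Fibers

variable {G H : Type*} [AddGroup G] [Fintype G] [AddGroup H] [Fintype H] [DecidableEq H]
  {φ : G →+ H}

theorem AddMonoidHom.card_fiber_mul_card_of_surjective (hφ : Function.Surjective φ) (h : H) :
    #{g | φ g = h} * card H = card G := by
  rw [← card_univ (α := G), card_eq_sum_card_fiberwise (s := univ) (t := univ) (f := φ) (by simp),
    sum_congr rfl fun h' _ => AddMonoidHom.card_fiber_eq_of_mem_range φ (hφ h') (hφ h),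
    sum_const, card_univ, smul_eq_mul, mul_comm]

theorem AddMonoidHom.card_filter_mem_mul_card_of_surjective (hφ : Function.Surjective φ)
    (S : Finset H) : #{g | φ g ∈ S} * card H = #S * card G := by
  rw [← sum_card_fiberwise_eq_card_filter, sum_mul,
    sum_congr rfl fun h _ => card_fiber_mul_card_of_surjective hφ h, sum_const, smul_eq_mul]

end Fibers

section Dual

variable {K V ι : Type*} [Field K] [Fintype K] [DecidableEq K] [AddCommGroup V] [Module K V]
  [Fintype V] [Fintype ι] [DecidableEq ι]

theorem Module.Dual.card_hammingNorm_comp_le_mul {f : Module.Dual K V} (hf : f ≠ 0) (k : ℕ) :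
    #{ξ : ι → V | hammingNorm (f ∘ ξ) ≤ k} * card K ^ card ι =
      #{w : ι → K | hammingNorm w ≤ k} * card V ^ card ι := by
  have := (f.toAddMonoidHom.compLeft ι).card_filter_mem_mul_card_of_surjective
    (LinearMap.surjective hf).comp_left {w : ι → K | hammingNorm w ≤ k}
  simp only [mem_filter, mem_univ, true_and, Fintype.card_fun] at this
  exact this

theorem exists_forall_dual_ne_zero_lt_hammingNorm {k : ℕ}
    (h : card V * #{w : ι → K | hammingNorm w ≤ k} ≤ card K ^ card ι) :
    ∃ ξ : ι → V, ∀ f : Module.Dual K V, f ≠ 0 → k < hammingNorm (f ∘ ξ) := by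
  classical
  have : Fintype (Module.Dual K V) := @Fintype.ofFinite _ (Module.finite_of_finite K)
  set B := #{w : ι → K | hammingNorm w ≤ k}
  set bad := ({f | f ≠ 0} : Finset (Module.Dual K V)).biUnion
    fun f => {ξ : ι → V | hammingNorm (f ∘ ξ) ≤ k}
  have hnonzero : #({f | f ≠ 0} : Finset (Module.Dual K V)) = card V - 1 := by
    rw [filter_ne', card_erase_of_mem (mem_univ _), card_univ, Module.card_eq_pow_finrank (K := K),
      Subspace.dual_finrank_eq, ← Module.card_eq_pow_finrank]
  have hB : 0 < B := card_pos.2 ⟨0, by simp⟩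
  have hV : 0 < card V := card_pos
  have hbad : #bad < #(univ : Finset (ι → V)) := by
    refine Nat.lt_of_mul_lt_mul_right (a := card K ^ card ι) ?_
    calc #bad * card K ^ card ι
        ≤ (∑ f ∈ ({f | f ≠ 0} : Finset (Module.Dual K V)),
            #{ξ : ι → V | hammingNorm (f ∘ ξ) ≤ k}) * card K ^ card ι := by
          gcongr; exact card_biUnion_le
      _ = (card V - 1) * B * card V ^ card ι := by
          rw [sum_mul, Finset.sum_congr rfl fun f hf =>
            Module.Dual.card_hammingNorm_comp_le_mul (mem_filter.1 hf).2 k, sum_const, hnonzero,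
            smul_eq_mul, mul_assoc]
      _ < card V * B * card V ^ card ι := by gcongr; exact Nat.sub_lt hV one_pos
      _ ≤ card K ^ card ι * card V ^ card ι := by gcongr
      _ = #(univ : Finset (ι → V)) * card K ^ card ι := by
          rw [card_univ, Fintype.card_fun, mul_comm]
  obtain ⟨ξ, -, hξ⟩ := exists_mem_notMem_of_card_lt_card hbad
  exact ⟨ξ, by simpa [bad] using hξ⟩

end Dual

theorem span_image_eq_top_of_card_compl_le {K V ι : Type*} [Field K] [DecidableEq K]
    [AddCommGroup V] [Module K V] [Fintype ι] [DecidableEq ι] {ξ : ι → V} {k : ℕ}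
    (hξ : ∀ f : Module.Dual K V, f ≠ 0 → k < hammingNorm (f ∘ ξ)) {I : Finset ι}
    (hI : #Iᶜ ≤ k) : Submodule.span K (ξ '' I) = ⊤ := by
  by_contra hne
  obtain ⟨f, hf0, hker⟩ :=
    (Submodule.span K (ξ '' I)).exists_le_ker_of_lt_top (lt_top_iff_ne_top.2 hne)
  have hsupp : hammingNorm (f ∘ ξ) ≤ #Iᶜ := by
    refine card_le_card fun i hi => mem_compl.2 fun hiI => (mem_filter.1 hi).2 ?_
    exact hker (Submodule.subset_span ⟨i, hiI, rfl⟩)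
  exact (hξ f hf0).not_ge (hsupp.trans hI)

theorem robust_spanning_family_general (M : ℕ) :
    ∃ ξ : Fin M → (Fin (M / 4) → ZMod 2),
      ∀ I : Finset (Fin M), (0.95 : ℝ) * M ≤ I.card →
        Submodule.span (ZMod 2) (ξ '' ↑I) = ⊤ := by
  have hcount : card (Fin (M / 4) → ZMod 2) * #{w : Fin M → ZMod 2 | hammingNorm w ≤ M / 20}
      ≤ card (ZMod 2) ^ card (Fin M) := by
    have hball := card_hammingNorm_le_le_sum_range_choose (Fin M) (M / 20)
    simp only [Fintype.card_fun, ZMod.card, Fintype.card_fin] at hball ⊢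
    exact (Nat.mul_le_mul_left _ hball).trans (two_pow_mul_sum_range_choose_le M)
  obtain ⟨ξ, hξ⟩ := exists_forall_dual_ne_zero_lt_hammingNorm hcount
  refine ⟨ξ, fun I hI => span_image_eq_top_of_card_compl_le hξ ?_⟩
  have h19 : 19 * M ≤ 20 * #I := by exact_mod_cast (by linarith : (19 : ℝ) * M ≤ 20 * #I)
  rw [card_compl, Fintype.card_fin]
  omega

/-- Lemma 9.1, case `M ≥ 20`. Let `M ≥ 20` and
`V = (ℤ/2ℤ)^{⌊M/4⌋}`. Then there exist `M` vectors `ξ₁, …, ξ_M ∈ V` such that any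
95 percent of them span `V`: for every `I ⊆ {1, …, M}` with `|I| ≥ 0.95·M`, the
vectors `{ξᵢ : i ∈ I}` span `V` over `ℤ/2ℤ`. -/
theorem robust_spanning_family (M : ℕ) (hM : 20 ≤ M) :
    ∃ ξ : Fin M → (Fin (M / 4) → ZMod 2),
      ∀ I : Finset (Fin M), (0.95 : ℝ) * M ≤ I.card →
        Submodule.span (ZMod 2) (ξ '' ↑I) = ⊤ :=
  robust_spanning_family_general M
end

section
/- Let G be a finite abelian group of odd order N, let β₁, β₂ : G → ℝ≥0 satisfy Σ_x β₁(x) = Σ_x β₂(x) = 1, and let A ⊆ G with |A| = αN. Define α₁(x) = (A ∗ β₁ ∗ β₁)(x) and α₂(x) = (A ∗ β₂ ∗ β₂)(x). Then Σ_x α₁(x)·α₂(x) ≥ α²N, and consequently Σ_x α₁(x)²·α₂(x) ≥ α³N. -/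
/-- Convolution on a finite abelian group: `(f ∗ g)(x) = Σ_y f(y) g(x − y)`. -/
def conv {G : Type*} [AddCommGroup G] [Fintype G] (f g : G → ℝ) : G → ℝ :=
  fun x => ∑ y : G, f y * g (x - y)

section aux
variable {G : Type*} [AddCommGroup G] [Fintype G]

lemma conv_comm' (f g : G → ℝ) : conv f g = conv g f := by
  funext x
  refine Fintype.sum_equiv (Equiv.subLeft x) _ _ fun y => ?_
  simp only [Equiv.subLeft_apply, sub_sub_cancel]
  ring

lemma conv_assoc' (f g h : G → ℝ) : conv (conv f g) h = conv f (conv g h) := by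
  funext x
  simp only [conv, Finset.sum_mul, Finset.mul_sum]
  rw [Finset.sum_comm]
  refine Finset.sum_congr rfl fun z _ => ?_
  refine Fintype.sum_equiv (Equiv.subRight z) _ _ fun y => ?_
  simp only [Equiv.subRight_apply]
  rw [show x - z - (y - z) = x - y by abel]
  ring

lemma conv_adjoint (β u v : G → ℝ) (hs : ∀ x, β (-x) = β x) :
    ∑ x : G, conv u β x * v x = ∑ x : G, u x * conv v β x := by
  simp only [conv, Finset.sum_mul, Finset.mul_sum]
  rw [Finset.sum_comm]
  refine Finset.sum_congr rfl fun a _ => Finset.sum_congr rfl fun b _ => ?_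
  rw [show β (b - a) = β (a - b) by rw [← hs (a - b), neg_sub]]
  ring

lemma conv_sum (u v : G → ℝ) :
    ∑ x : G, conv u v x = (∑ x : G, u x) * (∑ x : G, v x) := by
  simp only [conv]
  rw [Finset.sum_comm, Finset.sum_mul]
  refine Finset.sum_congr rfl fun y _ => ?_
  rw [← Finset.mul_sum]
  congr 1
  exact Fintype.sum_equiv (Equiv.subRight y) _ _ fun x => rfl

lemma conv_nonneg' {u v : G → ℝ} (hu : ∀ x, 0 ≤ u x) (hv : ∀ x, 0 ≤ v x) (x : G) :
    0 ≤ conv u v x :=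
  Finset.sum_nonneg fun y _ => mul_nonneg (hu y) (hv _)

end aux

/-- from the proof of Theorem 1.8. Let `G` be a finite abelian
group of odd order `N`, let `β₁, β₂ : G → ℝ≥0` be (symmetric) probability densities,
and let `A ⊆ G` with `|A| = αN`. With `α₁ = A ∗ β₁ ∗ β₁` and `α₂ = A ∗ β₂ ∗ β₂`,
one has `Σ_x α₁(x)α₂(x) ≥ α²N` and consequently `Σ_x α₁(x)²α₂(x) ≥ α³N`.
(As in the paper, `β₁, β₂` are smoothed Bohr cutoffs and hence symmetric:
`β(−x) = β(x)`.) -/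
theorem convolved_density_lower_bounds {G : Type*} [AddCommGroup G] [Fintype G]
    [DecidableEq G] (hodd : Odd (Fintype.card G))
    (β₁ β₂ : G → ℝ) (hβ₁0 : ∀ x, 0 ≤ β₁ x) (hβ₂0 : ∀ x, 0 ≤ β₂ x)
    (hβ₁1 : ∑ x : G, β₁ x = 1) (hβ₂1 : ∑ x : G, β₂ x = 1)
    (hβ₁s : ∀ x, β₁ (-x) = β₁ x) (hβ₂s : ∀ x, β₂ (-x) = β₂ x)
    (A : Finset G) (α : ℝ) (hA : (A.card : ℝ) = α * Fintype.card G) :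
    α ^ 2 * (Fintype.card G : ℝ) ≤
        (∑ x : G, conv (conv (fun y => if y ∈ A then (1 : ℝ) else 0) β₁) β₁ x *
          conv (conv (fun y => if y ∈ A then (1 : ℝ) else 0) β₂) β₂ x) ∧
      α ^ 3 * (Fintype.card G : ℝ) ≤
        ∑ x : G, (conv (conv (fun y => if y ∈ A then (1 : ℝ) else 0) β₁) β₁ x) ^ 2 *
          conv (conv (fun y => if y ∈ A then (1 : ℝ) else 0) β₂) β₂ x := by
  set f : G → ℝ := fun y => if y ∈ A then (1 : ℝ) else 0 with hf
  have hf0 : ∀ x, 0 ≤ f x := fun x => by by_cases h : x ∈ A <;> simp [hf, h]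
  have hfsum : ∑ x : G, f x = (A.card : ℝ) := by
    simp [hf]
  have hN : (0 : ℝ) < Fintype.card G := by positivity
  have hα : 0 ≤ α := by
    nlinarith [Nat.cast_nonneg (α := ℝ) A.card]
  set α₁ := conv (conv f β₁) β₁ with hα₁
  set α₂ := conv (conv f β₂) β₂ with hα₂
  set g := conv (conv f β₁) β₂ with hg
  have hα₁0 : ∀ x, 0 ≤ α₁ x := conv_nonneg' (conv_nonneg' hf0 hβ₁0) hβ₁0
  have hα₂0 : ∀ x, 0 ≤ α₂ x := conv_nonneg' (conv_nonneg' hf0 hβ₂0) hβ₂0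
  -- key rewriting: Σ α₁ α₂ = Σ g²
  have hswap : conv (conv f β₂) β₁ = g := by
    rw [hg, conv_assoc', conv_assoc', conv_comm' β₂ β₁]
  have key : ∑ x : G, α₁ x * α₂ x = ∑ x : G, g x ^ 2 := by
    rw [hα₁, conv_adjoint β₁ (conv f β₁) α₂ hβ₁s]
    have h2 : conv α₂ β₁ = conv (conv (conv f β₂) β₁) β₂ := by
      rw [hα₂, conv_assoc' (conv f β₂) β₂ β₁, conv_comm' β₂ β₁,
        ← conv_assoc' (conv f β₂) β₁ β₂]
    rw [h2, hswap, ← conv_adjoint β₂ (conv f β₁) g hβ₂s, hg]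
    exact Finset.sum_congr rfl fun x _ => (sq (g x)).symm
  have hgsum : ∑ x : G, g x = α * Fintype.card G := by
    rw [hg, conv_sum, conv_sum, hfsum, hβ₁1, hβ₂1, hA]; ring
  have hα₂sum : ∑ x : G, α₂ x = α * Fintype.card G := by
    rw [hα₂, conv_sum, conv_sum, hfsum, hβ₂1]; rw [hA]; ring
  -- first inequality via Cauchy-Schwarz with constant function 1
  have cs1 : (∑ x : G, g x) ^ 2 ≤ (Fintype.card G : ℝ) * ∑ x : G, g x ^ 2 := by
    have := Finset.sum_mul_sq_le_sq_mul_sq Finset.univ (fun _ : G => (1 : ℝ)) g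
    simpa using this
  have h1 : α ^ 2 * (Fintype.card G : ℝ) ≤ ∑ x : G, α₁ x * α₂ x := by
    rw [key]
    rw [hgsum] at cs1
    nlinarith
  refine ⟨h1, ?_⟩
  -- second inequality
  rcases eq_or_lt_of_le hα with hα0 | hαpos
  · have : α ^ 3 * (Fintype.card G : ℝ) = 0 := by rw [← hα0]; ring
    rw [this]
    exact Finset.sum_nonneg fun x _ =>
      mul_nonneg (sq_nonneg _) (hα₂0 x)
  · have cs2 : (∑ x : G, α₁ x * α₂ x) ^ 2 ≤
        (∑ x : G, α₁ x ^ 2 * α₂ x) * ∑ x : G, α₂ x := by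
      have := Finset.sum_mul_sq_le_sq_mul_sq Finset.univ
        (fun x : G => α₁ x * Real.sqrt (α₂ x)) (fun x : G => Real.sqrt (α₂ x))
      calc (∑ x : G, α₁ x * α₂ x) ^ 2
          = (∑ x : G, (α₁ x * Real.sqrt (α₂ x)) * Real.sqrt (α₂ x)) ^ 2 := by
            congr 1
            refine Finset.sum_congr rfl fun x _ => ?_
            rw [mul_assoc, Real.mul_self_sqrt (hα₂0 x)]
        _ ≤ (∑ x : G, (α₁ x * Real.sqrt (α₂ x)) ^ 2) * ∑ x : G, Real.sqrt (α₂ x) ^ 2 := this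
        _ = (∑ x : G, α₁ x ^ 2 * α₂ x) * ∑ x : G, α₂ x := by
            congr 1
            · refine Finset.sum_congr rfl fun x _ => ?_
              rw [mul_pow, Real.sq_sqrt (hα₂0 x)]
            · exact Finset.sum_congr rfl fun x _ => Real.sq_sqrt (hα₂0 x)
    rw [hα₂sum] at cs2
    have hpos : 0 < α * (Fintype.card G : ℝ) := mul_pos hαpos hN
    have hS2 : (α ^ 2 * (Fintype.card G : ℝ)) ^ 2 ≤ (∑ x : G, α₁ x * α₂ x) ^ 2 :=
      pow_le_pow_left₀ (by positivity) h1 2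
    nlinarith [cs2, hS2, hpos]
end
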